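/- arXiv:2411.02835 — 5 statements merged into one kernel-verified Lean document; each statement's English description precedes it below -/
import Mathlib

section
/- Let G be a finite graph with adjacency matrix A and degree matrix D, and suppose (x, y) ∈ ℂⁿ × ℂⁿ satisfies (D - I)y = λx and -x + Ay = λy for some λ ∈ ℂ (i.e., [x;y] is an eigenvector of the reduced non-backtracking matrix with eigenvalue λ). Then H(λ)y = 0, where H(t) = t²I - tA + (D - I). Moreover, for any t ∈ ℝ, H(t)y = (t - λ)(ty - x). -/
/-- If `[x; y]` is an eigenvector of the reduced non-backtracking matrix with
eigenvalue `λ`, then `H(λ) y = 0`, and for any real `t`, `H(t) y = (t - λ)(t y - x)`. -/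
theorem betheHessian_kernel (n : ℕ) (A D : Matrix (Fin n) (Fin n) ℂ)
    (x y : Fin n → ℂ) (lam : ℂ)
    (h1 : (D - 1).mulVec y = lam • x)
    (h2 : -x + A.mulVec y = lam • y)
    (H : ℂ → Matrix (Fin n) (Fin n) ℂ)
    (hH : ∀ s : ℂ, H s = s ^ 2 • (1 : Matrix (Fin n) (Fin n) ℂ) - s • A + (D - 1)) :
    (H lam).mulVec y = 0 ∧
      ∀ t : ℝ, (H (t : ℂ)).mulVec y = ((t : ℂ) - lam) • ((t : ℂ) • y - x) := by
  have hA : A.mulVec y = lam • y + x := by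
    have := h2
    funext i
    have h := congrFun h2 i
    simp at h ⊢
    linear_combination h
  have key : ∀ s : ℂ, (H s).mulVec y = (s - lam) • (s • y - x) := by
    intro s
    rw [hH]
    rw [Matrix.add_mulVec, Matrix.sub_mulVec, Matrix.smul_mulVec,
      Matrix.smul_mulVec, Matrix.one_mulVec, h1, hA]
    funext i
    simp
    ring
  refine ⟨?_, fun t => key t⟩
  rw [key]
  simp
end

section
/- Let G be a finite graph with adjacency matrix A and degree matrix D, and suppose y ∈ ℝⁿ is a unit vector with H(λ)y = 0 for some λ ≠ 0, where H(t) = t²I - tA + (D-I). Set x = (D-I)y/λ. Then for any t ∈ ℝ, yᵀH(t)y = (t - ⟨x,y⟩)(t - λ). -/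
open scoped Matrix

/-! The quadratic form `yᵀ H(t) y = t² - t ⟨y, A y⟩ + ⟨y, (D - I) y⟩` of a unit vector is a monic
quadratic in `t`. Since `H(λ) y = 0`, it vanishes at `t = λ`, so by Vieta its other root is the
constant term divided by `λ`, which is `⟨x, y⟩`. -/

theorem dotProduct_sq_smul_one_sub_smul_add_mulVec {ι R : Type*} [Fintype ι] [DecidableEq ι]
    [CommRing R] (A B : Matrix ι ι R) (y : ι → R) (s : R) :
    y ⬝ᵥ (s ^ 2 • (1 : Matrix ι ι R) - s • A + B) *ᵥ y =
      s ^ 2 * (y ⬝ᵥ y) - s * (y ⬝ᵥ A *ᵥ y) + y ⬝ᵥ B *ᵥ y := by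
  simp only [Matrix.add_mulVec, Matrix.sub_mulVec, Matrix.smul_mulVec, Matrix.one_mulVec,
    dotProduct_add, dotProduct_sub, dotProduct_smul, smul_eq_mul]

theorem sq_sub_mul_add_eq_mul_of_root {K : Type*} [Field K] {a b r : K} (hr : r ≠ 0)
    (hroot : r ^ 2 - r * a + b = 0) (t : K) :
    t ^ 2 - t * a + b = (t - b / r) * (t - r) := by
  have ha : a = r + b / r := by
    field_simp
    linear_combination -hroot
  rw [ha]
  field_simp
  ring

/-- If `y` is a unit vector with `H(λ) y = 0` for `λ ≠ 0` and `x = (D-I)y/λ`, then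
`yᵀ H(t) y = (t - ⟨x,y⟩)(t - λ)` for all real `t`. -/
theorem betheHessian_quadratic_form (n : ℕ) (A D : Matrix (Fin n) (Fin n) ℝ)
    (y : Fin n → ℝ) (lam : ℝ) (hlam : lam ≠ 0)
    (hy : y ⬝ᵥ y = 1)
    (H : ℝ → Matrix (Fin n) (Fin n) ℝ)
    (hH : ∀ s : ℝ, H s = s ^ 2 • (1 : Matrix (Fin n) (Fin n) ℝ) - s • A + (D - 1))
    (hker : (H lam).mulVec y = 0)
    (x : Fin n → ℝ) (hx : x = lam⁻¹ • (D - 1).mulVec y) :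
    ∀ t : ℝ, y ⬝ᵥ (H t).mulVec y = (t - x ⬝ᵥ y) * (t - lam) := by
  intro t
  have hquad (s : ℝ) :
      y ⬝ᵥ H s *ᵥ y = s ^ 2 - s * (y ⬝ᵥ A *ᵥ y) + y ⬝ᵥ (D - 1) *ᵥ y := by
    rw [hH, dotProduct_sq_smul_one_sub_smul_add_mulVec, hy, mul_one]
  have hroot : lam ^ 2 - lam * (y ⬝ᵥ A *ᵥ y) + y ⬝ᵥ (D - 1) *ᵥ y = 0 := by
    rw [← hquad, hker, dotProduct_zero]
  have hxy : x ⬝ᵥ y = y ⬝ᵥ (D - 1) *ᵥ y / lam := by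
    rw [hx, smul_dotProduct, smul_eq_mul, dotProduct_comm, inv_mul_eq_div]
  rw [hquad, hxy]
  exact sq_sub_mul_add_eq_mul_of_root hlam hroot t
end

section
/- Fix d ≥ 2 and t ≥ √d. The function ν(μ) = (t - (d + 1 - d/μ²)/μ)(t - μ) is decreasing in μ on the interval (√d, ∞). -/
/-! Differentiating, `-μ⁴ ν'(μ) = t (μ⁴ - (d + 1) μ² + 3d) - 2dμ`. Since `t ≥ √d`, it suffices that
`μ⁴ - (d + 1) μ² + 3d > 2√d μ`. With `s = √d` the difference of the two sides vanishes at `μ = s`,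
and after factoring out `μ - s` the cofactor is at least its value `2s(s² - 2) ≥ 0` at `μ = s`. -/

theorem hasDerivAt_nu (d t x : ℝ) (hx : x ≠ 0) :
    HasDerivAt (fun μ : ℝ => (t - (d + 1 - d / μ ^ 2) / μ) * (t - μ))
      ((2 * d * x - t * (x ^ 4 - (d + 1) * x ^ 2 + 3 * d)) / x ^ 4) x := by
  have h : HasDerivAt (fun μ : ℝ => (t - (d + 1 - d / μ ^ 2) / μ) * (t - μ)) _ x :=
    ((hasDerivAt_const x t).sub (((hasDerivAt_const x (d + 1)).sub
      ((hasDerivAt_const x d).div ((hasDerivAt_id' x).pow 2) (pow_ne_zero 2 hx))).div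
      (hasDerivAt_id' x) hx)).mul ((hasDerivAt_const x t).sub (hasDerivAt_id' x))
  convert h using 1
  simp only [Pi.sub_apply, Pi.div_apply, Pi.pow_apply]
  field_simp
  ring

theorem two_mul_mul_lt_quartic {s x : ℝ} (hs : 2 ≤ s ^ 2) (hs0 : 0 ≤ s) (hsx : s < x) :
    2 * s * x < x ^ 4 - (s ^ 2 + 1) * x ^ 2 + 3 * s ^ 2 := by
  have hfactor : x ^ 4 - (s ^ 2 + 1) * x ^ 2 + 3 * s ^ 2 - 2 * s * x
      = (x - s) * ((x - s) * (x ^ 2 + 2 * s * x + 2 * s ^ 2 - 1) + 2 * s * (s ^ 2 - 2)) := by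
    ring
  have hcofactor : 0 < (x - s) * (x ^ 2 + 2 * s * x + 2 * s ^ 2 - 1) + 2 * s * (s ^ 2 - 2) := by
    have : 0 < x ^ 2 + 2 * s * x + 2 * s ^ 2 - 1 := by nlinarith
    have : 0 ≤ 2 * s * (s ^ 2 - 2) := by positivity
    nlinarith
  linarith [mul_pos (sub_pos.2 hsx) hcofactor]

/-- For `d ≥ 2` and `t ≥ √d`, the function
`ν(μ) = (t - (d + 1 - d/μ²)/μ)(t - μ)` is decreasing on `(√d, ∞)`. -/
theorem nu_strictAntiOn (d t : ℝ) (hd : 2 ≤ d) (ht : Real.sqrt d ≤ t) :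
    StrictAntiOn (fun μ : ℝ => (t - (d + 1 - d / μ ^ 2) / μ) * (t - μ))
      (Set.Ioi (Real.sqrt d)) := by
  have hs0 : 0 < Real.sqrt d := Real.sqrt_pos.2 (by linarith)
  have hsq : Real.sqrt d ^ 2 = d := Real.sq_sqrt (by linarith)
  refine strictAntiOn_of_hasDerivWithinAt_neg (convex_Ioi _)
    (fun x hx => (hasDerivAt_nu d t x (hs0.trans hx).ne').continuousAt.continuousWithinAt)
    (fun x hx => (hasDerivAt_nu d t x (hs0.trans (interior_subset hx)).ne').hasDerivWithinAt)
    fun x hx => ?_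
  rw [interior_Ioi, Set.mem_Ioi] at hx
  have hx0 : 0 < x := hs0.trans hx
  have hquartic := two_mul_mul_lt_quartic (by rwa [hsq]) hs0.le hx
  rw [hsq] at hquartic
  have hkey : 2 * d * x < t * (x ^ 4 - (d + 1) * x ^ 2 + 3 * d) :=
    calc 2 * d * x = Real.sqrt d * (2 * Real.sqrt d * x) := by linear_combination (-2 * x) * hsq
      _ < Real.sqrt d * (x ^ 4 - (d + 1) * x ^ 2 + 3 * d) := mul_lt_mul_of_pos_left hquartic hs0
      _ ≤ t * (x ^ 4 - (d + 1) * x ^ 2 + 3 * d) :=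
        mul_le_mul_of_nonneg_right ht (by nlinarith)
  exact div_neg_of_neg_of_pos (by linarith) (by positivity)
end

section
/- Let M be an n×n Hermitian matrix, and let (λ₁, v₁), …, (λ_k, v_k) be approximate eigenpairs such that v₁, …, v_k are orthonormal and ‖Mvᵢ - λᵢvᵢ‖ ≤ ε for all i. Then there exist k eigenvalues ν₁, …, ν_k of M (counted with multiplicity) such that |λᵢ - νᵢ| ≤ 2√k·ε for all i. -/
open scoped InnerProductSpace
open Finset

/-!
Expand each `vᵢ` in an orthonormal eigenbasis `(uⱼ)` of `M` and put `wᵢⱼ = ‖⟪uⱼ, vᵢ⟫‖²`. The rows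
of `w` sum to `1` (Parseval) and its columns to at most `1` (Bessel), while
`∑ⱼ (νⱼ - λᵢ)² wᵢⱼ = ‖M vᵢ - λᵢ vᵢ‖² ≤ ε²`; by Chebyshev, row `i` has weight at most `1/(4k)`
outside `Sᵢ = {j | |λᵢ - νⱼ| ≤ 2√k ε}`. For a set `s` of rows, the weight of `s` on `⋃_{i ∈ s} Sᵢ`
is therefore more than `|s| - 1` and at most `|⋃_{i ∈ s} Sᵢ|`. This is Hall's condition, and a
matching `i ↦ f i ∈ Sᵢ` gives the eigenvalues `ν_{f i}`.
-/

theorem Finset.sum_filter_lt_mul_le_of_sum_mul_le {κ : Type*} (s : Finset κ) {a w : κ → ℝ}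
    {E c : ℝ} (ha : ∀ j ∈ s, 0 ≤ a j) (hw : ∀ j ∈ s, 0 ≤ w j) (hc : 0 ≤ c)
    (hE : ∑ j ∈ s, a j * w j ≤ E) :
    ∑ j ∈ s with E < c * a j, w j ≤ c := by
  have haw : ∀ j ∈ s, 0 ≤ a j * w j := fun j hj => mul_nonneg (ha j hj) (hw j hj)
  rcases (sum_nonneg haw |>.trans hE).eq_or_lt with rfl | hE0
  · have hzero : ∀ j ∈ s, a j * w j = 0 := (sum_eq_zero_iff_of_nonneg haw).mp
      (le_antisymm hE (sum_nonneg haw))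
    refine le_of_eq_of_le (sum_eq_zero fun j hj => ?_) hc
    rw [mem_filter] at hj
    exact (mul_eq_zero.mp (hzero j hj.1)).resolve_left (right_ne_zero_of_mul hj.2.ne')
  · refine le_of_mul_le_mul_left ?_ hE0
    calc E * ∑ j ∈ s with E < c * a j, w j
        ≤ ∑ j ∈ s with E < c * a j, c * (a j * w j) := by
          rw [mul_sum]
          refine sum_le_sum fun j hj => ?_
          rw [mem_filter] at hj
          rw [← mul_assoc]
          exact mul_le_mul_of_nonneg_right hj.2.le (hw j hj.1)
      _ ≤ c * ∑ j ∈ s, a j * w j := by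
          rw [← mul_sum]
          exact mul_le_mul_of_nonneg_left
            (sum_le_sum_of_subset_of_nonneg (filter_subset _ _) fun j hj _ => haw j hj) hc
      _ ≤ E * c := by rw [mul_comm E]; exact mul_le_mul_of_nonneg_left hE hc

theorem exists_injective_forall_mem_of_sum_le_one {ι κ : Type*} [Fintype ι] [DecidableEq κ]
    (w : ι → κ → ℝ) (S : ι → Finset κ) {c : ℝ} (hw : ∀ i j, 0 ≤ w i j)
    (hc : Fintype.card ι * c < 1) (hS : ∀ i, 1 - c ≤ ∑ j ∈ S i, w i j)
    (hcol : ∀ j, ∑ i, w i j ≤ 1) :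
    ∃ f : ι → κ, Function.Injective f ∧ ∀ i, f i ∈ S i := by
  refine (all_card_le_biUnion_card_iff_exists_injective S).mp fun s => ?_
  have hsc : (#s : ℝ) * c < 1 := by
    have : (#s : ℝ) ≤ Fintype.card ι := by exact_mod_cast card_le_univ s
    rcases le_total 0 c with hc0 | hc0 <;> nlinarith
  suffices (#s : ℝ) * (1 - c) ≤ #(s.biUnion S) by
    have : (#s : ℝ) < #(s.biUnion S) + 1 := by linarith
    exact_mod_cast Nat.lt_succ_iff.mp (by exact_mod_cast this)
  calc (#s : ℝ) * (1 - c) ≤ ∑ i ∈ s, ∑ j ∈ S i, w i j := by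
        rw [← nsmul_eq_mul, ← sum_const]; exact sum_le_sum fun i _ => hS i
    _ ≤ ∑ i ∈ s, ∑ j ∈ s.biUnion S, w i j :=
        sum_le_sum fun i hi => sum_le_sum_of_subset_of_nonneg (subset_biUnion_of_mem S hi)
          fun j _ _ => hw i j
    _ = ∑ j ∈ s.biUnion S, ∑ i ∈ s, w i j := sum_comm
    _ ≤ ∑ j ∈ s.biUnion S, 1 :=
        sum_le_sum fun j _ => (sum_le_sum_of_subset_of_nonneg (subset_univ s)
          fun i _ _ => hw i j).trans (hcol j)
    _ = #(s.biUnion S) := by simp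

section Eigenbasis

variable {𝕜 E κ : Type*} [RCLike 𝕜] [NormedAddCommGroup E] [InnerProductSpace 𝕜 E] [Fintype κ]
  {T : E →ₗ[𝕜] E} {b : OrthonormalBasis κ 𝕜 E} {ν : κ → ℝ}

theorem OrthonormalBasis.inner_apply_of_apply_eq_smul (hb : ∀ j, T (b j) = (ν j : 𝕜) • b j)
    (x : E) (j : κ) : ⟪b j, T x⟫_𝕜 = ν j * ⟪b j, x⟫_𝕜 := by
  classical
  conv_lhs => rw [← b.sum_repr' x]
  simp [hb, inner_sum, inner_smul_right, b.inner_eq_ite, mul_comm]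

theorem OrthonormalBasis.norm_apply_sub_smul_sq (hb : ∀ j, T (b j) = (ν j : 𝕜) • b j)
    (x : E) (μ : ℝ) :
    ‖T x - (μ : 𝕜) • x‖ ^ 2 = ∑ j, (ν j - μ) ^ 2 * ‖⟪b j, x⟫_𝕜‖ ^ 2 := by
  rw [← b.sum_sq_norm_inner_right]
  refine sum_congr rfl fun j _ => ?_
  rw [inner_sub_right, inner_smul_right, b.inner_apply_of_apply_eq_smul hb, ← sub_mul, norm_mul,
    mul_pow, ← RCLike.ofReal_sub, RCLike.norm_ofReal, sq_abs]

theorem OrthonormalBasis.one_sub_le_sum_sq_norm_inner_filter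
    (hb : ∀ j, T (b j) = (ν j : 𝕜) • b j) {x : E} (hx : ‖x‖ = 1) {μ ε m : ℝ} (hm : 0 < m)
    (hμ : ‖T x - (μ : 𝕜) • x‖ ≤ ε) :
    1 - 1 / (4 * m) ≤ ∑ j with |μ - ν j| ≤ 2 * √m * ε, ‖⟪b j, x⟫_𝕜‖ ^ 2 := by
  have hε : 0 ≤ ε := (norm_nonneg _).trans hμ
  have hfar := sum_filter_lt_mul_le_of_sum_mul_le univ (fun j _ => sq_nonneg (ν j - μ))
    (fun j _ => sq_nonneg ‖⟪b j, x⟫_𝕜‖) (by positivity : 0 ≤ 1 / (4 * m))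
    (by rw [← b.norm_apply_sub_smul_sq hb]; gcongr : _ ≤ ε ^ 2)
  have hnear_far : univ.filter (fun j => ¬|μ - ν j| ≤ 2 * √m * ε) ⊆
      univ.filter (fun j => ε ^ 2 < 1 / (4 * m) * (ν j - μ) ^ 2) := by
    intro j hj
    simp only [mem_filter, mem_univ, true_and, not_le] at hj ⊢
    have h := pow_lt_pow_left₀ hj (by positivity) two_ne_zero
    rw [sq_abs, mul_pow, mul_pow, Real.sq_sqrt hm.le] at h
    rw [one_div_mul_eq_div, lt_div_iff₀ (by positivity)]
    nlinarith
  have htotal : ∑ j, ‖⟪b j, x⟫_𝕜‖ ^ 2 = 1 := by rw [b.sum_sq_norm_inner_right, hx, one_pow]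
  rw [← sum_filter_add_sum_filter_not univ (fun j => |μ - ν j| ≤ 2 * √m * ε)] at htotal
  linarith [sum_le_sum_of_subset_of_nonneg hnear_far fun j _ _ => sq_nonneg ‖⟪b j, x⟫_𝕜‖]

theorem OrthonormalBasis.exists_injective_abs_sub_le {ι : Type*} [Fintype ι]
    (hb : ∀ j, T (b j) = (ν j : 𝕜) • b j) {v : ι → E} (hv : Orthonormal 𝕜 v) {lam : ι → ℝ}
    {ε : ℝ} (happrox : ∀ i, ‖T (v i) - (lam i : 𝕜) • v i‖ ≤ ε) :
    ∃ f : ι → κ, Function.Injective f ∧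
      ∀ i, |lam i - ν (f i)| ≤ 2 * √(Fintype.card ι) * ε := by
  classical
  have hc : (Fintype.card ι : ℝ) * (1 / (4 * Fintype.card ι)) < 1 := by
    calc (Fintype.card ι : ℝ) * (1 / (4 * Fintype.card ι))
        = 1 / 4 * (Fintype.card ι / Fintype.card ι) := by ring
      _ ≤ 1 / 4 * 1 := by gcongr; exact div_self_le_one _
      _ < 1 := by norm_num
  obtain ⟨f, hf, hfS⟩ := exists_injective_forall_mem_of_sum_le_one
    (fun i j => ‖⟪b j, v i⟫_𝕜‖ ^ 2) (fun i => {j | |lam i - ν j| ≤ 2 * √(Fintype.card ι) * ε})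
    (fun _ _ => sq_nonneg _) hc
    (fun i => b.one_sub_le_sum_sq_norm_inner_filter hb (hv.1 i)
      (by exact_mod_cast Fintype.card_pos_iff.mpr ⟨i⟩) (happrox i))
    (fun j => by simpa [norm_inner_symm] using hv.sum_inner_products_le (x := b j) (s := univ))
  exact ⟨f, hf, fun i => (mem_filter.mp (hfS i)).2⟩

end Eigenbasis

theorem Matrix.IsHermitian.toEuclideanLin_eigenvectorBasis {𝕜 n : Type*} [RCLike 𝕜] [Fintype n]
    [DecidableEq n] {A : Matrix n n 𝕜} (hA : A.IsHermitian) (j : n) :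
    toEuclideanLin A (hA.eigenvectorBasis j) = (hA.eigenvalues j : 𝕜) • hA.eigenvectorBasis j := by
  ext i
  simpa using congrFun (hA.mulVec_eigenvectorBasis j) i

theorem hermitian_approx_eigenpairs_general (n k : ℕ) (M : Matrix (Fin n) (Fin n) ℂ)
    (hM : M.IsHermitian) (v : Fin k → EuclideanSpace ℂ (Fin n))
    (hv : Orthonormal ℂ v) (lam : Fin k → ℝ) (ε : ℝ)
    (happrox : ∀ i, ‖Matrix.toEuclideanLin M (v i) - (lam i : ℂ) • v i‖ ≤ ε) :
    ∃ f : Fin k → Fin n, Function.Injective f ∧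
      ∀ i, |lam i - hM.eigenvalues (f i)| ≤ 2 * Real.sqrt k * ε := by
  simpa only [Fintype.card_fin] using hM.eigenvectorBasis.exists_injective_abs_sub_le
    (ν := hM.eigenvalues) hM.toEuclideanLin_eigenvectorBasis hv happrox

/-- If `v₁, …, v_k` are orthonormal approximate eigenvectors of a Hermitian matrix `M`
with approximate eigenvalues `λᵢ` and error `ε`, then there are `k` eigenvalues of `M`
(counted with multiplicity) within `2√k ε` of the `λᵢ`. -/
theorem hermitian_approx_eigenpairs (n k : ℕ) (M : Matrix (Fin n) (Fin n) ℂ)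
    (hM : M.IsHermitian) (v : Fin k → EuclideanSpace ℂ (Fin n))
    (hv : Orthonormal ℂ v) (lam : Fin k → ℝ) (ε : ℝ) (hε : 0 ≤ ε)
    (happrox : ∀ i, ‖Matrix.toEuclideanLin M (v i) - (lam i : ℂ) • v i‖ ≤ ε) :
    ∃ f : Fin k → Fin n, Function.Injective f ∧
      ∀ i, |lam i - hM.eigenvalues (f i)| ≤ 2 * Real.sqrt k * ε :=
  hermitian_approx_eigenpairs_general n k M hM v hv lam ε happrox
end

section
/- Let B̃ = [[0, D-I],[-I, A]] be the 2n×2n reduced non-backtracking matrix of a graph, and suppose [x; y] is an eigenvector of B̃ with eigenvalue λ and ‖y‖ = 1. Set α = ⟨y, Ay⟩ and β = ⟨y, (D-I)y⟩ (both real if y is real, but for complex y take the sesquilinear forms, which are real since A and D-I are real symmetric). Then λ² - αλ + β = 0. Consequently, if λ is not real, then |λ|² = β = |λ|·|⟨x, y⟩|, i.e., |⟨x, y⟩| = |λ|. -/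
open scoped Matrix ComplexConjugate

/-!
Write `c = ⟨y, x⟩`. Pairing the second eigen-equation `Ay = λy + x` with `y` gives `α = λ + c`,
and pairing the first, `(D - I)y = λx`, gives `β = λc`; so `λ² - αλ + β = 0` is immediate.
Since `α` and `β` are Hermitian forms they are real, so `λ` and `c` have real sum and product:
they are the two roots of a real quadratic, and when `λ` is not real this forces `c = conj λ`.
Hence `β = |λ|²` and `⟨x, y⟩ = conj c = λ`.
-/

theorem Matrix.IsHermitian.isSelfAdjoint_star_dotProduct_mulVec {n R : Type*} [Fintype n]
    [CommSemiring R] [StarRing R] {M : Matrix n n R} (hM : M.IsHermitian) (v : n → R) :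
    IsSelfAdjoint (star v ⬝ᵥ M *ᵥ v) := by
  rw [IsSelfAdjoint, ← Matrix.star_dotProduct, Matrix.star_mulVec, ← Matrix.dotProduct_mulVec,
    hM.eq]

theorem Complex.eq_conj_of_im_add_eq_zero_of_im_mul_eq_zero {z w : ℂ} (hsum : (z + w).im = 0)
    (hprod : (z * w).im = 0) (hz : z.im ≠ 0) : w = conj z := by
  simp only [Complex.add_im, Complex.mul_im] at hsum hprod
  have hre : w.re = z.re := by
    have : z.im * (w.re - z.re) = 0 := by linear_combination hprod - z.re * hsum
    linarith [(mul_eq_zero.mp this).resolve_left hz]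
  apply Complex.ext <;> simp only [Complex.conj_re, Complex.conj_im] <;> linarith

/-- If `[x; y]` is an eigenvector of the reduced non-backtracking matrix with eigenvalue
`λ` and `‖y‖ = 1`, then with `α = ⟨y, Ay⟩` and `β = ⟨y, (D-I)y⟩` one has
`λ² - αλ + β = 0`; consequently, if `λ` is not real then `|λ|² = β = |λ||⟨x,y⟩|`,
i.e. `|⟨x,y⟩| = |λ|`. -/
theorem nonreal_eigenvalue_inner_product (n : ℕ) (A D : Matrix (Fin n) (Fin n) ℂ)
    (hA : A.IsHermitian) (hD : (D - 1).IsHermitian)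
    (x y : Fin n → ℂ) (lam : ℂ)
    (h1 : (D - 1).mulVec y = lam • x)
    (h2 : -x + A.mulVec y = lam • y)
    (hy : star y ⬝ᵥ y = 1)
    (α β : ℂ)
    (hα : α = star y ⬝ᵥ A.mulVec y)
    (hβ : β = star y ⬝ᵥ (D - 1).mulVec y) :
    lam ^ 2 - α * lam + β = 0 ∧
      (lam.im ≠ 0 →
        ‖lam‖ ^ 2 = β.re ∧
        β.re = ‖lam‖ * ‖star x ⬝ᵥ y‖ ∧
        ‖star x ⬝ᵥ y‖ = ‖lam‖) := by
  set c := star y ⬝ᵥ x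
  have hAy : A *ᵥ y = lam • y + x := by rw [← h2, neg_add_cancel_comm]
  have hα_eq : α = lam + c := by
    rw [hα, hAy, dotProduct_add, dotProduct_smul, hy, smul_eq_mul, mul_one]
  have hβ_eq : β = lam * c := by rw [hβ, h1, dotProduct_smul, smul_eq_mul]
  refine ⟨by rw [hα_eq, hβ_eq]; ring, fun hlam => ?_⟩
  have hc : c = conj lam := by
    refine Complex.eq_conj_of_im_add_eq_zero_of_im_mul_eq_zero ?_ ?_ hlam
    · rw [← hα_eq, hα, ← Complex.conj_eq_iff_im]
      exact hA.isSelfAdjoint_star_dotProduct_mulVec y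
    · rw [← hβ_eq, hβ, ← Complex.conj_eq_iff_im]
      exact hD.isSelfAdjoint_star_dotProduct_mulVec y
  have hxy : star x ⬝ᵥ y = lam := by
    rw [Matrix.star_dotProduct]
    exact (congrArg star hc).trans (Complex.conj_conj lam)
  have hβ_re : β.re = ‖lam‖ ^ 2 := by
    rw [hβ_eq, hc, Complex.mul_conj, Complex.ofReal_re, Complex.normSq_eq_norm_sq]
  refine ⟨hβ_re.symm, ?_, ?_⟩
  · rw [hβ_re, hxy, sq]
  · rw [hxy]
end
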